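/- Let λ be a nonempty partition of n. (i) For X ∈ {B,C,D}, if the X-collapse λ_X is defined, then #(λ_X) equals #λ or #λ + 1. (ii) If n is odd, then every partition in 𝒫_B(n) has an odd number of parts; if n is even, then every partition in 𝒫_D(n) has an even number of parts. (iii) If n is even, then the C-collapse λ_C has exactly #λ parts. -/

import Mathlib

namespace NilDual

/-- A "partition" is encoded as a multiset of natural numbers (its parts). -/
abbrev Ptn := Multiset ℕ

/-- All parts are positive. -/
def IsPartition (l : Ptn) : Prop := ∀ a ∈ l, 0 < a

/-- `height l a` is the number of parts of `l` that are ≥ `a`. -/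
def height (l : Ptn) (a : ℕ) : ℕ := Multiset.card (l.filter (fun p => a ≤ p))

/-- `psum l j` is the sum of the `j` largest parts of `l`. -/
def psum (l : Ptn) (j : ℕ) : ℕ := ∑ a ∈ Finset.Icc 1 l.sum, min j (height l a)

/-- `Dom l m` means `l ≤ m` in the dominance order. -/
def Dom (l m : Ptn) : Prop := ∀ j : ℕ, psum l j ≤ psum m j

/-- The transpose (conjugate) partition. -/
def transpose (l : Ptn) : Ptn :=
  Multiset.filter (fun x => 0 < x)
    (Multiset.map (fun a => height l a) (Finset.Icc 1 l.sum).val)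

/-- The largest part (0 for the empty partition). -/
def maxPart (l : Ptn) : ℕ := l.sup

/-- The smallest part (0 for the empty partition). -/
noncomputable def minPart (l : Ptn) : ℕ := sInf {a : ℕ | a ∈ l}

/-- `λ⁺`: add 1 to the largest part. -/
def up (l : Ptn) : Ptn := (maxPart l + 1) ::ₘ l.erase (maxPart l)

/-- `λ⁻`: subtract 1 from the smallest part, deleting it if it becomes 0. -/
noncomputable def down (l : Ptn) : Ptn :=
  if minPart l ≤ 1 then l.erase (minPart l)
  else (minPart l - 1) ::ₘ l.erase (minPart l)

/-- The join `λ ∨ μ = (λ* ∪ μ*)*`. -/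
def pjoin (l m : Ptn) : Ptn := transpose (transpose l + transpose m)

/-- `λ₋ = (λ*⁻)*`. -/
noncomputable def lowerStar (l : Ptn) : Ptn := transpose (down (transpose l))

inductive PType | B | C | D
deriving DecidableEq

/-- Parts of this parity must occur with even multiplicity in a partition of type `X`. -/
def badPart : PType → ℕ → Prop
  | PType.B, a => Even a
  | PType.C, a => Odd a
  | PType.D, a => Even a

/-- Membership in `𝒫_X` (sum unconstrained). -/
def InP (X : PType) (l : Ptn) : Prop :=
  IsPartition l ∧ ∀ a : ℕ, badPart X a → Even (l.count a)

/-- The parity of `n` required for `𝒫_X(n)` to be defined. -/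
def sumParity : PType → ℕ → Prop
  | PType.B, n => Odd n
  | PType.C, n => Even n
  | PType.D, n => Even n

/-- `m` is the X-collapse of `l`: `m ∈ 𝒫_X(|l|)`, `m ≤ l` in dominance order, and `m`
dominates every member of `𝒫_X(|l|)` that is dominated by `l`. -/
def IsCollapse (X : PType) (l m : Ptn) : Prop :=
  InP X m ∧ m.sum = l.sum ∧ Dom m l ∧
    ∀ ν : Ptn, InP X ν → ν.sum = l.sum → Dom ν l → Dom ν m

def CollapseDefined (X : PType) (l : Ptn) : Prop := ∃ m, IsCollapse X l m

open Classical in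
/-- The X-collapse `λ_X` (junk value `0` if it does not exist). -/
noncomputable def collapse (X : PType) (l : Ptn) : Ptn :=
  if h : CollapseDefined X l then h.choose else 0

/-- `l` is superior to `m`: smallest part of `l` ≥ largest part of `m`. -/
def Superior (l m : Ptn) : Prop := maxPart m ≤ minPart l

def EvenlySuperior (l m : Ptn) : Prop := ∃ k : ℕ, Even k ∧ maxPart m ≤ k ∧ k ≤ minPart l

def OddlySuperior (l m : Ptn) : Prop := ∃ k : ℕ, Odd k ∧ maxPart m ≤ k ∧ k ≤ minPart l

/-- The parity required of marked parts in type `X`. -/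
def markParity : PType → ℕ → Prop
  | PType.C, a => Even a
  | _, a => Odd a

/-- `(ν, η)` is a marked partition of type `X`, with underlying partition `λ = ν + η`. -/
def IsMarked (X : PType) (nu eta : Ptn) : Prop :=
  InP X (nu + eta) ∧ sumParity X (nu + eta).sum ∧
  (∀ a ∈ nu, nu.count a = 1 ∧ markParity X a) ∧
  ((X = PType.B ∨ X = PType.D) → Even (Multiset.card nu))

/-- The Sommers duality map `d_S` on marked partitions `(ν, η)`. -/
noncomputable def dS (X : PType) (nu eta : Ptn) : Ptn :=
  match X with
  | PType.B => collapse PType.C (transpose (nu + collapse PType.C (down eta)))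
  | PType.C => collapse PType.B (transpose (nu + collapse PType.B (up eta)))
  | PType.D =>
      collapse PType.D (transpose (nu + transpose (collapse PType.D (transpose eta))))

/-- `a` is a markable part of `l` in type `X`. -/
def Markable (X : PType) (l : Ptn) (a : ℕ) : Prop :=
  a ∈ l ∧ markParity X a ∧
    (match X with
     | PType.B => Odd (height l a)
     | PType.C => Even (height l a)
     | PType.D => Even (height l a))

/-- The marked partition `⟨l, ν⟩` is reduced. -/
def Reduced (X : PType) (l nu : Ptn) : Prop := ∀ a ∈ nu, Markable X l a

/-- The parts entering the definition of a special marked partition: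
even of odd height (B), odd of even height (C), even of even height (D). -/
def AntiPart (X : PType) (l : Ptn) (a : ℕ) : Prop :=
  match X with
  | PType.B => Even a ∧ Odd (height l a)
  | PType.C => Odd a ∧ Even (height l a)
  | PType.D => Even a ∧ Even (height l a)

/-- The reduced marked partition `⟨l, ν⟩` is special. -/
def SpecialMP (X : PType) (l nu : Ptn) : Prop :=
  ∀ a ∈ l, AntiPart X l a → Even (height nu a)

/-- `a` is the largest part of `l` whose height satisfies `P`. -/
def LargestWith (l : Ptn) (P : ℕ → Prop) (a : ℕ) : Prop :=
  a ∈ l ∧ P (height l a) ∧ ∀ b ∈ l, P (height l b) → b ≤ a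

/-- Height parity for the top marked part in a basic block. -/
def heightParity : PType → ℕ → Prop
  | PType.B => fun n => Odd n
  | _ => fun n => Even n

/-- A basic block of type `X`. -/
def BasicBlock (X : PType) (nu eta : Ptn) : Prop :=
  IsMarked X nu eta ∧
  ((∃ n1 n2 : ℕ, n1 < n2 ∧ nu = {n2, n1} ∧ n1 = minPart (nu + eta) ∧
      LargestWith (nu + eta) (heightParity X) n2) ∨
   (X = PType.C ∧ ∃ n2 : ℕ, nu = {n2} ∧ LargestWith (nu + eta) (heightParity X) n2))

/-- An ultrabasic block: a basic block with `n₁ ≤ 1`. -/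
def Ultrabasic (X : PType) (nu eta : Ptn) : Prop :=
  BasicBlock X nu eta ∧ (Multiset.card nu = 2 → minPart nu ≤ 1)

/-!
Write `part l j` for the `(j+1)`-st largest part of `l` and `psum l j` for the sum of the `j`
largest. A partition `m` below `λ` of the same size has `#m ≥ #λ`, since
`psum λ #m ≥ psum m #m = n`. Conversely `λ_X` dominates, hence has at most as many parts as, every
member of `𝒫_X(n)` below `λ`. The balanced partition with `#λ` parts, all equal to `⌊n/#λ⌋` or
`⌈n/#λ⌉`, lies below `λ`; it is in `𝒫_C` when `n` is even, and splitting one of its parts into two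
odd ones gives a member of `𝒫_B` or `𝒫_D` with `#λ + 1` parts. For `μ ∈ 𝒫_X` the sum of
`a + shift X` over the parts `a` of `μ` is even, as the parts with `a + shift X` odd come in pairs;
this gives the parity statements.

Existence of collapses: call an index `i` bad if `psum l i + shift X * i` is odd. Then `l ∈ 𝒫_X` iff
no corner `i` (where `part l i < part l (i - 1)`) of `l` is bad. If some corner is bad, one box of
`l` can be moved down so that `psum` drops by one exactly on a window of bad indices ending at a
corner. A member of `𝒫_X` below `l` cannot touch `psum l` on such a window (where it touches, it is
flat, and flatness propagates to the corner), so it lies below the moved partition as well; both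
have the same collapse, and we induct.
-/

open Finset in
/-- `part l j` is the `(j+1)`-st largest part of `l`, and `0` once `j ≥ card l`. -/
def part (l : Ptn) (j : ℕ) : ℕ := #{a ∈ Icc 1 l.sum | j < height l a}

section Height

variable {l : Ptn} {a b j : ℕ}

lemma height_antitone (l : Ptn) : Antitone (height l) := fun _ _ hab =>
  Multiset.card_le_card (Multiset.monotone_filter_right l fun _ hp => hab.trans hp)

lemma height_zero (l : Ptn) : height l 0 = Multiset.card l := by
  simp [height]

lemma height_one (hl : IsPartition l) : height l 1 = Multiset.card l :=
  congrArg _ (Multiset.filter_eq_self.2 hl)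

lemma height_le_card (l : Ptn) (a : ℕ) : height l a ≤ Multiset.card l :=
  Multiset.card_le_card (Multiset.filter_le _ l)

lemma height_pos_of_mem (h : a ∈ l) : 0 < height l a :=
  Multiset.card_pos_iff_exists_mem.2 ⟨a, Multiset.mem_filter.2 ⟨h, le_rfl⟩⟩

lemma card_le_sum (hl : IsPartition l) : Multiset.card l ≤ l.sum := by
  simpa using Multiset.card_nsmul_le_sum (a := 1) hl

lemma height_cons (l : Ptn) (b a : ℕ) :
    height (b ::ₘ l) a = height l a + if a ≤ b then 1 else 0 := by
  unfold height
  rw [Multiset.filter_cons]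
  split_ifs <;> simp

lemma height_add (s t : Ptn) (a : ℕ) : height (s + t) a = height s a + height t a := by
  simp [height, Multiset.filter_add]

lemma height_replicate (m v a : ℕ) :
    height (Multiset.replicate m v) a = if a ≤ v then m else 0 := by
  unfold height
  split_ifs with h
  · rw [Multiset.filter_eq_self.2 fun p hp => (Multiset.eq_of_mem_replicate hp) ▸ h,
      Multiset.card_replicate]
  · rw [Multiset.filter_eq_nil.2 fun p hp => (Multiset.eq_of_mem_replicate hp) ▸ h]
    rfl

lemma height_eq_height_succ_add_count (l : Ptn) (a : ℕ) :
    height l a = height l (a + 1) + Multiset.count a l := by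
  induction l using Multiset.induction_on with
  | empty => simp [height]
  | cons b s ih =>
    rw [height_cons, height_cons, Multiset.count_cons, ih]
    split_ifs <;> omega

lemma mem_of_height_succ_lt (h : height l (a + 1) < height l a) : a ∈ l := by
  have := height_eq_height_succ_add_count l a
  exact Multiset.count_pos.1 (by omega)

lemma le_sum_of_height_pos (h : 0 < height l a) : a ≤ l.sum := by
  obtain ⟨p, hp⟩ := Multiset.card_pos_iff_exists_mem.1 h
  obtain ⟨hpl, hap⟩ := Multiset.mem_filter.1 hp
  exact hap.trans (Multiset.le_sum_of_mem hpl)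

lemma sum_height_Icc (hM : ∀ p ∈ l, p ≤ b) : ∑ a ∈ Finset.Icc 1 b, height l a = l.sum := by
  induction l using Multiset.induction_on with
  | empty => simp [height]
  | cons p s ih =>
    have hp : p ≤ b := hM p (Multiset.mem_cons_self p s)
    simp_rw [height_cons, Finset.sum_add_distrib,
      ih fun q hq => hM q (Multiset.mem_cons_of_mem hq), Finset.sum_boole]
    have : {x ∈ Finset.Icc 1 b | x ≤ p} = Finset.Icc 1 p := by
      ext x; simp only [Finset.mem_filter, Finset.mem_Icc]; omega
    simp [this, add_comm]

lemma sum_height (l : Ptn) : ∑ a ∈ Finset.Icc 1 l.sum, height l a = l.sum :=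
  sum_height_Icc fun _ hp => Multiset.le_sum_of_mem hp

lemma height_filter_le (l : Ptn) (a b : ℕ) :
    height (l.filter (a ≤ ·)) b = min (height l a) (height l b) := by
  rcases le_total a b with hab | hba
  · rw [min_eq_right (height_antitone l hab), height, height, Multiset.filter_filter]
    exact congrArg _ (Multiset.filter_congr fun p _ => ⟨fun h => h.1, fun h => ⟨h, hab.trans h⟩⟩)
  · rw [min_eq_left (height_antitone l hba), height, height, Multiset.filter_filter]
    exact congrArg _ (Multiset.filter_congr fun p _ => ⟨fun h => h.2, fun h => ⟨hba.trans h, h⟩⟩)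

end Height

section Part

variable {l : Ptn} {a c j : ℕ}

lemma le_part_iff (ha : 1 ≤ a) : a ≤ part l j ↔ j < height l a := by
  constructor
  · intro h
    by_contra hj
    have hsub : {x ∈ Finset.Icc 1 l.sum | j < height l x} ⊆ Finset.Icc 1 (a - 1) := by
      intro x hx
      obtain ⟨hx, hjx⟩ := Finset.mem_filter.1 hx
      have : x < a := lt_of_not_ge fun hax => hj (hjx.trans_le (height_antitone l hax))
      exact Finset.mem_Icc.2 ⟨(Finset.mem_Icc.1 hx).1, by omega⟩
    have := Finset.card_le_card hsub
    rw [Nat.card_Icc] at this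
    exact absurd h (by unfold part; omega)
  · intro h
    have hsum : a ≤ l.sum := le_sum_of_height_pos (by omega)
    have hsub : Finset.Icc 1 a ⊆ {x ∈ Finset.Icc 1 l.sum | j < height l x} := by
      intro x hx
      obtain ⟨h1, h2⟩ := Finset.mem_Icc.1 hx
      exact Finset.mem_filter.2
        ⟨Finset.mem_Icc.2 ⟨h1, h2.trans hsum⟩, h.trans_le (height_antitone l h2)⟩
    have := Finset.card_le_card hsub
    rw [Nat.card_Icc] at this
    unfold part
    omega

lemma part_antitone (l : Ptn) : Antitone (part l) := fun _ _ hij =>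
  Finset.card_le_card (Finset.monotone_filter_right _ fun _ _ h => hij.trans_lt h)

lemma part_eq_of_height (h₁ : height l (c + 1) ≤ j) (h₂ : j < height l c) : part l j = c := by
  have hle : part l j ≤ c := by
    by_contra h
    exact absurd ((le_part_iff (l := l) (j := j) (by omega : 1 ≤ c + 1)).1 (by omega)) (by omega)
  rcases Nat.eq_zero_or_pos c with rfl | hc
  · omega
  · exact le_antisymm hle ((le_part_iff hc).2 h₂)

lemma part_height_lt (ha : 1 ≤ a) : part l (height l a) < a :=
  lt_of_not_ge fun h => (le_part_iff ha).1 h |>.false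

lemma le_part_height_pred (ha : 1 ≤ a) (h : 0 < height l a) : a ≤ part l (height l a - 1) :=
  (le_part_iff ha).2 (by omega)

lemma height_part_pred (hj : 1 ≤ j) (h : part l j < part l (j - 1)) :
    height l (part l (j - 1)) = j := by
  have hpos : 1 ≤ part l (j - 1) := by omega
  have h₁ := (le_part_iff hpos).1 le_rfl
  have h₂ : ¬ j < height l (part l (j - 1)) := fun h' => absurd ((le_part_iff hpos).2 h') (by omega)
  omega

lemma height_part_succ_le (l : Ptn) (j : ℕ) : height l (part l j + 1) ≤ j :=
  le_of_not_gt fun h => absurd ((le_part_iff (by omega)).2 h) (by omega)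

lemma part_mem_or_eq_zero (l : Ptn) (j : ℕ) : part l j ∈ l ∨ part l j = 0 := by
  rcases Nat.eq_zero_or_pos (part l j) with h | h
  · exact Or.inr h
  · exact Or.inl (mem_of_height_succ_lt
      ((height_part_succ_le l j).trans_lt ((le_part_iff h).1 le_rfl)))

end Part

section Psum

variable {l : Ptn} {a j : ℕ}

lemma psum_succ (l : Ptn) (j : ℕ) : psum l (j + 1) = psum l j + part l j := by
  unfold psum part
  have : ∀ a ∈ Finset.Icc 1 l.sum,
      min (j + 1) (height l a) = min j (height l a) + if j < height l a then 1 else 0 := by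
    intro a _
    split_ifs <;> omega
  rw [Finset.sum_congr rfl this, Finset.sum_add_distrib, Finset.sum_boole, Nat.cast_id]

lemma psum_eq_sum_range (l : Ptn) (j : ℕ) : psum l j = ∑ t ∈ Finset.range j, part l t := by
  induction j with
  | zero => simp [psum]
  | succ j ih => rw [psum_succ, ih, Finset.sum_range_succ]

lemma psum_le_sum (l : Ptn) (j : ℕ) : psum l j ≤ l.sum :=
  (Finset.sum_le_sum fun _ _ => min_le_right _ _).trans (sum_height l).le

lemma psum_of_card_le (h : Multiset.card l ≤ j) : psum l j = l.sum := by
  unfold psum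
  conv_rhs => rw [← sum_height l]
  exact Finset.sum_congr rfl fun a _ => min_eq_right ((height_le_card l a).trans h)

lemma psum_lt_sum (hl : IsPartition l) (h : j < Multiset.card l) : psum l j < l.sum := by
  have h₁ : 1 ≤ part l j := (le_part_iff le_rfl).2 (by rwa [height_one hl])
  have h₂ := psum_le_sum l (j + 1)
  rw [psum_succ] at h₂
  omega

lemma psum_height (l : Ptn) (a : ℕ) : psum l (height l a) = (l.filter (a ≤ ·)).sum := by
  unfold psum
  simp_rw [← height_filter_le]
  exact sum_height_Icc fun p hp => Multiset.le_sum_of_mem (Multiset.mem_of_mem_filter hp)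

lemma mul_part_pred_le_psum (l : Ptn) (j : ℕ) : j * part l (j - 1) ≤ psum l j := by
  rw [psum_eq_sum_range]
  simpa using Finset.card_nsmul_le_sum (Finset.range j) (part l) _
    fun t ht => part_antitone l (by have := Finset.mem_range.1 ht; omega)

lemma psum_le_psum_add_mul (l : Ptn) {k : ℕ} (h : j ≤ k) :
    psum l k ≤ psum l j + (k - j) * part l j := by
  rw [psum_eq_sum_range, psum_eq_sum_range, ← Finset.sum_range_add_sum_Ico _ h]
  simpa using Finset.sum_le_card_nsmul (Finset.Ico j k) (part l) _
    fun t ht => part_antitone l (Finset.mem_Ico.1 ht).1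

lemma Dom.card_le_card {m : Ptn} (hl : IsPartition l) (hsum : m.sum = l.sum) (h : Dom m l) :
    Multiset.card l ≤ Multiset.card m := by
  by_contra hlt
  have := h (Multiset.card m)
  rw [psum_of_card_le le_rfl] at this
  exact absurd (psum_lt_sum hl (not_le.1 hlt)) (by omega)

end Psum

def shift : PType → ℕ
  | PType.C => 0
  | _ => 1

lemma badPart_iff_odd (X : PType) (a : ℕ) : badPart X a ↔ Odd (a + shift X) := by
  cases X <;> simp [badPart, shift, Nat.odd_add_one]

lemma even_sum_add_shift_mul_card {X : PType} {s : Ptn}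
    (h : ∀ a, badPart X a → Even (s.count a)) : Even (s.sum + shift X * Multiset.card s) := by
  have hs : s.sum + shift X * Multiset.card s = ∑ a ∈ s.toFinset, s.count a * (a + shift X) := by
    rw [← Multiset.toFinset_sum_count_eq, Finset.mul_sum, Finset.sum_multiset_count s,
      ← Finset.sum_add_distrib]
    exact Finset.sum_congr rfl fun a _ => by simp only [smul_eq_mul]; ring
  rw [hs]
  refine Finset.even_sum _ fun a _ => ?_
  by_cases ha : badPart X a
  · exact (h a ha).mul_right _
  · exact (Nat.not_odd_iff_even.1 ((badPart_iff_odd X a).not.1 ha)).mul_left _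

lemma InP.even_sum_add {X : PType} {l : Ptn} (h : InP X l) :
    Even (l.sum + shift X * Multiset.card l) :=
  even_sum_add_shift_mul_card h.2

def BadIndex (X : PType) (l : Ptn) (i : ℕ) : Prop := Odd (psum l i + shift X * i)

section BadIndex

variable {X : PType} {l : Ptn} {a i t : ℕ}

lemma not_badIndex_zero (X : PType) (l : Ptn) : ¬ BadIndex X l 0 := by
  simp [BadIndex, psum]

lemma badIndex_succ_iff (h : ¬ badPart X (part l t)) :
    BadIndex X l (t + 1) ↔ BadIndex X l t := by
  have heven := Nat.not_odd_iff_even.1 ((badPart_iff_odd X _).not.1 h)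
  have : psum l (t + 1) + shift X * (t + 1) = psum l t + shift X * t + (part l t + shift X) := by
    rw [psum_succ]; ring
  simp only [BadIndex, this, Nat.odd_add, heven, iff_true]

lemma badIndex_height_iff : BadIndex X l (height l a) ↔
    Odd ((l.filter (a ≤ ·)).sum + shift X * Multiset.card (l.filter (a ≤ ·))) := by
  rw [BadIndex, psum_height]
  rfl

lemma InP.not_badIndex_height (h : InP X l) (a : ℕ) : ¬ BadIndex X l (height l a) := by
  rw [badIndex_height_iff, Nat.not_odd_iff_even]
  refine even_sum_add_shift_mul_card fun b hb => ?_
  rw [Multiset.count_filter]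
  split_ifs
  · exact h.2 b hb
  · exact .zero

lemma inP_of_forall_not_badIndex_height (hl : IsPartition l)
    (h : ∀ a, ¬ BadIndex X l (height l a)) : InP X l := by
  refine ⟨hl, fun a ha => ?_⟩
  have hsplit : l.filter (a ≤ ·) = Multiset.replicate (l.count a) a + l.filter (a + 1 ≤ ·) := by
    have hdisj : l.filter (fun x => x = a ∧ a + 1 ≤ x) = 0 :=
      Multiset.filter_eq_nil.2 fun x _ hx => by omega
    rw [← Multiset.filter_eq' l a, Multiset.filter_add_filter, hdisj, add_zero]
    exact Multiset.filter_congr fun x _ => by omega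
  have h₁ := h a
  have h₂ := h (a + 1)
  rw [badIndex_height_iff, Nat.not_odd_iff_even] at h₁ h₂
  rw [hsplit, Multiset.sum_add, Multiset.card_add, Multiset.sum_replicate,
    Multiset.card_replicate, smul_eq_mul,
    show l.count a * a + (l.filter (a + 1 ≤ ·)).sum
        + shift X * (l.count a + Multiset.card (l.filter (a + 1 ≤ ·)))
      = (l.filter (a + 1 ≤ ·)).sum + shift X * Multiset.card (l.filter (a + 1 ≤ ·))
        + l.count a * (a + shift X) by ring, Nat.even_add] at h₁
  exact (Nat.even_mul.1 (h₁.1 h₂)).resolve_right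
    (Nat.not_even_iff_odd.2 ((badPart_iff_odd X a).1 ha))

lemma InP.not_badIndex_of_part_lt (h : InP X l) (hi : 1 ≤ i) (hc : part l i < part l (i - 1)) :
    ¬ BadIndex X l i :=
  height_part_pred hi hc ▸ h.not_badIndex_height _

lemma inP_or_exists_badIndex (hl : IsPartition l) :
    InP X l ∨ ∃ i, 1 ≤ i ∧ part l i < part l (i - 1) ∧ BadIndex X l i := by
  refine or_iff_not_imp_right.2 fun hbad => inP_of_forall_not_badIndex_height hl fun a => ?_
  wlog ha : 1 ≤ a generalizing a
  · rw [Nat.lt_one_iff.1 (not_le.1 ha), height_zero, ← height_one hl]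
    exact this 1 le_rfl
  rcases Nat.eq_zero_or_pos (height l a) with h0 | hpos
  · exact h0 ▸ not_badIndex_zero X l
  · exact fun hb => hbad ⟨_, hpos,
      (part_height_lt ha).trans_le (le_part_height_pred ha hpos), hb⟩

end BadIndex

/-- Move one box from a row of length `b` to a row of length `e` (a new row when `e = 0`). -/
def moveBox (l : Ptn) (b e : ℕ) : Ptn := (b - 1) ::ₘ (e + 1) ::ₘ (l.erase b).erase e

structure IsMove (l : Ptn) (b e : ℕ) : Prop where
  mem : b ∈ l
  mem_or_eq_zero : e ∈ l ∨ e = 0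
  add_two_le : e + 2 ≤ b

namespace IsMove

variable {l : Ptn} {b e : ℕ}

lemma cons_cons_erase_erase_eq_or (h : IsMove l b e) :
    b ::ₘ e ::ₘ (l.erase b).erase e = l ∨ (e = 0 ∧ b ::ₘ (l.erase b).erase e = l) := by
  by_cases he : e ∈ l.erase b
  · exact Or.inl (by rw [Multiset.cons_erase he, Multiset.cons_erase h.mem])
  · have he0 : e = 0 := h.mem_or_eq_zero.resolve_left fun he' =>
      he ((Multiset.mem_erase_of_ne (by have := h.add_two_le; omega)).2 he')
    exact Or.inr ⟨he0, by rw [Multiset.erase_of_notMem he, Multiset.cons_erase h.mem]⟩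

lemma sum_moveBox (h : IsMove l b e) : (moveBox l b e).sum = l.sum := by
  have := h.add_two_le
  rcases h.cons_cons_erase_erase_eq_or with hl | ⟨he, hl⟩ <;>
  · conv_rhs => rw [← hl]
    simp only [moveBox, Multiset.sum_cons]
    omega

lemma isPartition_moveBox (hl : IsPartition l) (h : IsMove l b e) :
    IsPartition (moveBox l b e) := by
  have := h.add_two_le
  intro a ha
  rcases Multiset.mem_cons.1 ha with rfl | ha
  · omega
  rcases Multiset.mem_cons.1 ha with rfl | ha
  · omega
  exact hl a (Multiset.mem_of_le ((Multiset.erase_le _ _).trans (Multiset.erase_le _ _)) ha)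

lemma height_moveBox (h : IsMove l b e) {x : ℕ} (hx : 1 ≤ x) :
    height (moveBox l b e) x + (if x = b then 1 else 0)
      = height l x + if x = e + 1 then 1 else 0 := by
  have := h.add_two_le
  simp only [moveBox, height_cons]
  rcases h.cons_cons_erase_erase_eq_or with hl | ⟨he, hl⟩ <;>
  · conv_rhs => rw [← hl]
    simp only [height_cons]
    split_ifs <;> omega

lemma psum_moveBox_add (h : IsMove l b e) (j : ℕ) :
    psum (moveBox l b e) j + (if height l b ≤ j ∧ j ≤ height l (e + 1) then 1 else 0)
      = psum l j := by
  have := h.add_two_le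
  have hbsum := Multiset.le_sum_of_mem h.mem
  have hb : b ∈ Finset.Icc 1 l.sum := Finset.mem_Icc.2 ⟨by omega, hbsum⟩
  have he : e + 1 ∈ Finset.Icc 1 l.sum := Finset.mem_Icc.2 ⟨by omega, by omega⟩
  have hpoint : ∀ x ∈ Finset.Icc 1 l.sum,
      min j (height (moveBox l b e) x) + (if x = b then if height l b ≤ j then 1 else 0 else 0)
        = min j (height l x) + if x = e + 1 then if height l (e + 1) < j then 1 else 0 else 0 := by
    intro x hx
    have := h.height_moveBox (Finset.mem_Icc.1 hx).1
    split_ifs at this ⊢ <;> subst_vars <;> omega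
  have hsum := Finset.sum_congr rfl hpoint
  rw [Finset.sum_add_distrib, Finset.sum_add_distrib, Finset.sum_ite_eq', Finset.sum_ite_eq',
    if_pos hb, if_pos he] at hsum
  have hanti := height_antitone l (show e + 1 ≤ b by omega)
  unfold psum
  rw [h.sum_moveBox]
  split_ifs at hsum ⊢ <;> omega

lemma dom_moveBox (h : IsMove l b e) : Dom (moveBox l b e) l := fun j => by
  have := h.psum_moveBox_add j
  omega

lemma psum_moveBox_lt (h : IsMove l b e) {j : ℕ} (h₁ : height l b ≤ j)
    (h₂ : j ≤ height l (e + 1)) : psum (moveBox l b e) j < psum l j := by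
  have := h.psum_moveBox_add j
  rw [if_pos ⟨h₁, h₂⟩] at this
  omega

end IsMove

section Window

variable {X : PType} {l v : Ptn} {c i t w : ℕ}

lemma badIndex_iff_of_psum_eq (h : psum v t = psum l t) : BadIndex X v t ↔ BadIndex X l t := by
  rw [BadIndex, BadIndex, h]

lemma badIndex_iff_badIndex_height (hc : ¬ badPart X c) (h₁ : height l (c + 1) ≤ t)
    (h₂ : t ≤ height l c) : BadIndex X l t ↔ BadIndex X l (height l c) := by
  induction h : height l c - t generalizing t with
  | zero => rw [show t = height l c by omega]
  | succ d ih =>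
    rw [← ih (t := t + 1) (by omega) (by omega) (by omega)]
    exact (badIndex_succ_iff (part_eq_of_height h₁ (by omega) ▸ hc)).symm

lemma part_pred_eq_and_psum_succ_eq (hdom : Dom v l) (ht : 1 ≤ t) (heq : psum v t = psum l t)
    (hflat : part v (t - 1) = part v t) :
    part l (t - 1) = part l t ∧ psum v (t + 1) = psum l (t + 1) := by
  have hv := psum_succ v (t - 1)
  have hl := psum_succ l (t - 1)
  rw [Nat.sub_add_cancel ht] at hv hl
  have := part_antitone l (Nat.sub_le t 1)
  have := hdom (t - 1)
  have h₂ := hdom (t + 1)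
  rw [psum_succ v t, psum_succ l t] at h₂ ⊢
  omega

lemma psum_lt_of_badIndex_window (hv : InP X v) (hdom : Dom v l) (hi : 1 ≤ i)
    (hw : part l w < part l (w - 1)) (hbad : ∀ t, i ≤ t → t ≤ w → BadIndex X l t)
    (ht₁ : i ≤ t) (ht₂ : t ≤ w) : psum v t < psum l t := by
  have touch : ∀ t, i ≤ t → t ≤ w → psum v t = psum l t →
      part l (t - 1) = part l t ∧ psum v (t + 1) = psum l (t + 1) := by
    intro t ht₁ ht₂ heq
    have hvbad := (badIndex_iff_of_psum_eq heq).2 (hbad t ht₁ ht₂)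
    have hflat : part v (t - 1) = part v t := le_antisymm
      (not_lt.1 fun hlt => hv.not_badIndex_of_part_lt (by omega) hlt hvbad)
      (part_antitone v (Nat.sub_le t 1))
    exact part_pred_eq_and_psum_succ_eq hdom (by omega) heq hflat
  refine lt_of_le_of_ne (hdom t) fun heq => ?_
  induction h : w - t generalizing t with
  | zero => exact absurd (touch t ht₁ ht₂ heq).1 (by rw [show t = w by omega]; omega)
  | succ d ih => exact ih (by omega) (by omega) (touch t ht₁ ht₂ heq).2 (by omega)

end Window

section Collapse

variable {X : PType} {l m : Ptn} {b c e i u : ℕ}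

lemma isCollapse_self (h : InP X l) : IsCollapse X l l :=
  ⟨h, rfl, fun _ => le_rfl, fun _ _ _ hd => hd⟩

lemma isCollapse_of_isMove (h : IsMove l b e)
    (hbad : ∀ t, height l b ≤ t → t ≤ height l (e + 1) → BadIndex X l t)
    (hm : IsCollapse X (moveBox l b e) m) : IsCollapse X l m := by
  obtain ⟨hmX, hmsum, hmdom, hmax⟩ := hm
  have hbe := h.add_two_le
  have hb : 1 ≤ height l b := height_pos_of_mem h.mem
  have he : height l b ≤ height l (e + 1) := height_antitone l (by omega)
  refine ⟨hmX, hmsum.trans h.sum_moveBox, fun j => (hmdom j).trans (h.dom_moveBox j),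
    fun v hvX hvsum hvdom => hmax v hvX (hvsum.trans h.sum_moveBox.symm) fun j => ?_⟩
  have hmove := h.psum_moveBox_add j
  split_ifs at hmove with hj
  · have := psum_lt_of_badIndex_window hvX hvdom hb
      ((part_height_lt (by omega)).trans_le (le_part_height_pred (by omega) (by omega)))
      hbad hj.1 hj.2
    omega
  · exact (hvdom j).trans (by omega)

lemma exists_isMove_of_not_badPart_lower (hu : u ∈ l) (hcu : u = c + 1) (hc : 1 ≤ c)
    (hgood : ¬ badPart X c) (hbad : BadIndex X l (height l u)) :
    ∃ b e, IsMove l b e ∧ ∀ t, height l b ≤ t → t ≤ height l (e + 1) → BadIndex X l t := by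
  subst hcu
  have hd := part_height_lt (l := l) hc
  have hd₁ := height_part_succ_le l (height l c)
  have hd₂ := height_antitone l (show part l (height l c) + 1 ≤ c by omega)
  refine ⟨c + 1, part l (height l c), ⟨hu, part_mem_or_eq_zero _ _, by omega⟩, fun t h₁ h₂ => ?_⟩
  have hc₁ := height_antitone l (show c ≤ c + 1 by omega)
  exact (badIndex_iff_badIndex_height hgood h₁ (by omega)).2
    ((badIndex_iff_badIndex_height hgood le_rfl hc₁).1 hbad)

lemma exists_isMove_of_not_badPart_upper (hc : c ∈ l ∨ c = 0) (hcu : u = c + 1)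
    (hgood : ¬ badPart X u) (hbad : BadIndex X l (height l u)) :
    ∃ b e, IsMove l b e ∧ ∀ t, height l b ≤ t → t ≤ height l (e + 1) → BadIndex X l t := by
  subst hcu
  have hblock : ∀ t, height l (c + 2) ≤ t → t ≤ height l (c + 1) → BadIndex X l t :=
    fun t h₁ h₂ => (badIndex_iff_badIndex_height hgood h₁ h₂).2 hbad
  have hp : 0 < height l (c + 2) := Nat.pos_of_ne_zero fun h0 =>
    not_badIndex_zero X l (hblock 0 h0.le (Nat.zero_le _))
  have hb := le_part_height_pred (show 1 ≤ c + 2 by omega) hp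
  have hbh : height l (part l (height l (c + 2) - 1)) = height l (c + 2) :=
    height_part_pred hp ((part_height_lt (by omega)).trans_le hb)
  refine ⟨part l (height l (c + 2) - 1), c,
    ⟨(part_mem_or_eq_zero _ _).resolve_right (by omega), hc, by omega⟩, fun t h₁ h₂ => ?_⟩
  exact hblock t (hbh ▸ h₁) h₂

lemma exists_isMove (hl : IsPartition l) (hC : X = PType.C → Even l.sum) (hi : 1 ≤ i)
    (hcorner : part l i < part l (i - 1)) (hbad : BadIndex X l i) :
    ∃ b e, IsMove l b e ∧ ∀ t, height l b ≤ t → t ≤ height l (e + 1) → BadIndex X l t := by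
  set u := part l (i - 1)
  set c := part l i
  have hu : height l u = i := height_part_pred hi hcorner
  have hc : height l (c + 1) = i :=
    le_antisymm (height_part_succ_le l i) (hu ▸ height_antitone l (by omega))
  have hum : u ∈ l := (part_mem_or_eq_zero l (i - 1)).resolve_right (by omega)
  rw [← hu] at hbad
  -- If `u = c + 1`, the window is stretched across the block of `c`'s or of `u`'s, whichever
  -- part size does not flip the badness of indices.
  by_cases hgap : c + 2 ≤ u
  · refine ⟨u, c, ⟨hum, part_mem_or_eq_zero l i, hgap⟩, fun t h₁ h₂ => ?_⟩
    rwa [show t = height l u by omega]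
  by_cases hcgood : 1 ≤ c ∧ ¬ badPart X c
  · exact exists_isMove_of_not_badPart_lower hum (by omega) hcgood.1 hcgood.2 hbad
  refine exists_isMove_of_not_badPart_upper (part_mem_or_eq_zero l i) (by omega)
    (fun hubad => ?_) hbad
  rw [badPart_iff_odd] at hubad
  rcases not_and_or.1 hcgood with hc0 | hcbad
  · rw [show u = 1 by omega] at hubad hbad
    cases X
    · exact Nat.not_odd_iff_even.2 even_two hubad
    · simp only [BadIndex, shift, zero_mul, add_zero, height_one hl,
        psum_of_card_le le_rfl] at hbad
      exact Nat.not_odd_iff_even.2 (hC rfl) hbad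
    · exact Nat.not_odd_iff_even.2 even_two hubad
  · rw [not_not, badPart_iff_odd] at hcbad
    rw [show u + shift X = c + shift X + 1 by omega, Nat.odd_add_one] at hubad
    exact hubad hcbad

lemma exists_isCollapse (hl : IsPartition l) (hC : X = PType.C → Even l.sum) :
    ∃ m, IsCollapse X l m := by
  induction h : ∑ t ∈ Finset.range (l.sum + 1), psum l t using Nat.strong_induction_on
    generalizing l with
  | _ w ih =>
  rcases inP_or_exists_badIndex (X := X) hl with hX | ⟨i, hi, hcorner, hbad⟩
  · exact ⟨l, isCollapse_self hX⟩
  obtain ⟨b, e, hmove, hwindow⟩ := exists_isMove hl hC hi hcorner hbad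
  have hb : height l b < l.sum + 1 := by
    have := height_le_card l b
    have := card_le_sum hl
    omega
  have hlt : ∑ t ∈ Finset.range ((moveBox l b e).sum + 1), psum (moveBox l b e) t < w := by
    rw [hmove.sum_moveBox, ← h]
    exact Finset.sum_lt_sum (fun t _ => hmove.dom_moveBox t) ⟨height l b, Finset.mem_range.2 hb,
      hmove.psum_moveBox_lt le_rfl (height_antitone l (by have := hmove.add_two_le; omega))⟩
  obtain ⟨m, hm⟩ := ih _ hlt (hmove.isPartition_moveBox hl) (hmove.sum_moveBox ▸ hC) rfl
  exact ⟨m, isCollapse_of_isMove hmove hwindow hm⟩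

lemma isCollapse_collapse (h : CollapseDefined X l) : IsCollapse X l (collapse X l) := by
  rw [collapse, dif_pos h]
  exact h.choose_spec

lemma IsCollapse.card_le_card (hl : IsPartition l) (h : IsCollapse X l m) :
    Multiset.card l ≤ Multiset.card m :=
  h.2.2.1.card_le_card hl h.2.1

lemma IsCollapse.card_le_card_of_dom (h : IsCollapse X l m) {v : Ptn} (hv : InP X v)
    (hsum : v.sum = l.sum) (hdom : Dom v l) : Multiset.card m ≤ Multiset.card v :=
  (h.2.2.2 v hv hsum hdom).card_le_card h.1.1 (hsum.trans h.2.1.symm)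

end Collapse

section Balanced

def balanced (q r k : ℕ) : Ptn := Multiset.replicate r (q + 1) + Multiset.replicate (k - r) q

variable {l : Ptn} {q r k j : ℕ}

lemma card_balanced (hrk : r ≤ k) : Multiset.card (balanced q r k) = k := by
  simp [balanced]
  omega

lemma sum_balanced (hrk : r ≤ k) : (balanced q r k).sum = k * q + r := by
  obtain ⟨s, rfl⟩ := Nat.exists_eq_add_of_le hrk
  simp only [balanced, Multiset.sum_add, Multiset.sum_replicate, smul_eq_mul,
    Nat.add_sub_cancel_left]
  ring

lemma isPartition_balanced (hq : 1 ≤ q) : IsPartition (balanced q r k) := by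
  intro a ha
  rcases Multiset.mem_add.1 ha with h | h <;> rw [Multiset.eq_of_mem_replicate h] <;> omega

lemma count_balanced (a : ℕ) : (balanced q r k).count a
    = (if a = q + 1 then r else 0) + if a = q then k - r else 0 := by
  simp only [balanced, Multiset.count_add, Multiset.count_replicate]
  split_ifs <;> omega

lemma part_balanced_le (t : ℕ) : part (balanced q r k) t ≤ q + if t < r then 1 else 0 := by
  by_contra h
  have := (le_part_iff (l := balanced q r k) (j := t) (a := q + (if t < r then 1 else 0) + 1)
    (by omega)).1 (by omega)
  simp only [balanced, height_add, height_replicate] at this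
  split_ifs at this <;> omega

lemma psum_balanced_le (j : ℕ) : psum (balanced q r k) j ≤ j * q + min j r := by
  rw [psum_eq_sum_range]
  refine (Finset.sum_le_sum fun t _ => part_balanced_le t).trans_eq ?_
  rw [Finset.sum_add_distrib, Finset.sum_const, Finset.card_range, smul_eq_mul, Finset.sum_boole]
  have : {t ∈ Finset.range j | t < r} = Finset.range (min j r) := by
    ext t; simp only [Finset.mem_filter, Finset.mem_range]; omega
  rw [this, Finset.card_range, Nat.cast_id]

lemma dom_balanced (hrk : r < k) (hcard : Multiset.card l = k) (hsum : l.sum = k * q + r) :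
    Dom (balanced q r k) l := by
  intro j
  have hbal := psum_balanced_le (q := q) (r := r) (k := k) j
  rcases le_or_gt k j with hkj | hjk
  · have := psum_le_sum (balanced q r k) j
    rw [sum_balanced hrk.le] at this
    rw [psum_of_card_le (l := l) (by omega)]
    omega
  by_cases hbig : q + 1 ≤ part l (j - 1)
  · have := mul_part_pred_le_psum l j
    have := Nat.mul_le_mul_left j hbig
    have := min_le_left j r
    rw [mul_add, mul_one] at *
    omega
  · have hsmall := Nat.mul_le_mul_left (k - j)
      ((part_antitone l (Nat.sub_le j 1)).trans (by omega : part l (j - 1) ≤ q))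
    have := psum_le_psum_add_mul l hjk.le
    rw [← hcard, psum_of_card_le le_rfl, hcard] at this
    have : (k - j) * q + j * q = k * q := by rw [← add_mul, Nat.sub_add_cancel hjk.le]
    have := min_le_right j r
    omega

end Balanced

section Witness

variable {X : PType} {l : Ptn} {q r k : ℕ}

lemma shift_eq_one (hX : X ≠ PType.C) : shift X = 1 := by
  cases X <;> simp_all [shift]

lemma inP_C_balanced (hq : 1 ≤ q) (hrk : r ≤ k) (heven : Even (k * q + r)) :
    InP PType.C (balanced q r k) := by
  refine ⟨isPartition_balanced hq, fun a ha => ?_⟩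
  change Odd a at ha
  rw [count_balanced]
  split_ifs with h₁ h₂ h₂
  · omega
  · subst h₁
    rw [Nat.odd_add_one, Nat.not_odd_iff_even] at ha
    rw [Nat.even_add, Nat.even_mul] at heven
    simpa [ha] using heven
  · subst h₂
    rw [zero_add, Nat.even_sub hrk]
    rw [Nat.even_add, Nat.even_mul] at heven
    have := Nat.not_even_iff_odd.2 ha
    tauto
  · exact .zero

lemma exists_inP_dom_balanced (hX : X ≠ PType.C) (hq : 1 ≤ q) (hrk : r ≤ k) :
    ∃ v, InP X v ∧ v.sum = (balanced q r k).sum ∧ Dom v (balanced q r k) ∧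
      Multiset.card v ≤ k + 1 := by
  have hbal := isPartition_balanced (q := q) (r := r) (k := k) hq
  by_cases hok : ∀ a, badPart X a → Even ((balanced q r k).count a)
  · exact ⟨_, ⟨hbal, hok⟩, rfl, fun _ => le_rfl, by rw [card_balanced hrk]; omega⟩
  push Not at hok
  obtain ⟨a, ha, hodd⟩ := hok
  rw [badPart_iff_odd, shift_eq_one hX, Nat.odd_add_one, Nat.not_odd_iff_even] at ha
  have hmem : a ∈ balanced q r k :=
    Multiset.count_pos.1 (Nat.pos_of_ne_zero fun h => hodd (h ▸ .zero))
  have hmove : IsMove (balanced q r k) a 0 :=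
    ⟨hmem, Or.inr rfl, by have := hbal a hmem; rw [Nat.even_iff] at ha; omega⟩
  have h0 : 0 ∉ (balanced q r k).erase a := fun h => (hbal 0 (Multiset.mem_of_mem_erase h)).false
  refine ⟨moveBox _ a 0, ⟨hmove.isPartition_moveBox hbal, fun x hx => ?_⟩, hmove.sum_moveBox,
    hmove.dom_moveBox, ?_⟩
  · rw [badPart_iff_odd, shift_eq_one hX, Nat.odd_add_one, Nat.not_odd_iff_even] at hx
    simp only [moveBox, Multiset.erase_of_notMem h0, Multiset.count_cons]
    have hcx := count_balanced (q := q) (r := r) (k := k) x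
    have hca := count_balanced (q := q) (r := r) (k := k) a
    have := hbal a hmem
    rw [Nat.even_iff] at ha hx hodd ⊢
    by_cases hxa : x = a
    · subst hxa
      rw [Multiset.count_erase_self]
      split_ifs <;> omega
    · rw [Multiset.count_erase_of_ne hxa]
      split_ifs at hcx hca ⊢ <;> omega
  · have := Multiset.card_erase_add_one hmem
    rw [card_balanced hrk] at this
    simp only [moveBox, Multiset.erase_of_notMem h0, Multiset.card_cons]
    omega

lemma exists_card_mul_add (hl : IsPartition l) (hne : l ≠ 0) :
    ∃ q r, 1 ≤ q ∧ r < Multiset.card l ∧ l.sum = Multiset.card l * q + r := by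
  have hk := Multiset.card_pos.2 hne
  exact ⟨l.sum / Multiset.card l, l.sum % Multiset.card l,
    (Nat.one_le_div_iff hk).2 (card_le_sum hl), Nat.mod_lt _ hk, (Nat.div_add_mod _ _).symm⟩

lemma exists_inP_C_dom_card_eq (hl : IsPartition l) (hne : l ≠ 0) (heven : Even l.sum) :
    ∃ v, InP PType.C v ∧ v.sum = l.sum ∧ Dom v l ∧ Multiset.card v = Multiset.card l := by
  obtain ⟨q, r, hq, hrk, hsum⟩ := exists_card_mul_add hl hne
  exact ⟨_, inP_C_balanced hq hrk.le (hsum ▸ heven), (sum_balanced hrk.le).trans hsum.symm,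
    dom_balanced hrk rfl hsum, card_balanced hrk.le⟩

lemma exists_inP_dom_card_le_succ (hl : IsPartition l) (hne : l ≠ 0) (hX : X ≠ PType.C) :
    ∃ v, InP X v ∧ v.sum = l.sum ∧ Dom v l ∧ Multiset.card v ≤ Multiset.card l + 1 := by
  obtain ⟨q, r, hq, hrk, hsum⟩ := exists_card_mul_add hl hne
  obtain ⟨v, hv, hvsum, hvdom, hvcard⟩ := exists_inP_dom_balanced hX hq hrk.le
  exact ⟨v, hv, hvsum.trans ((sum_balanced hrk.le).trans hsum.symm),
    fun j => (hvdom j).trans (dom_balanced hrk rfl hsum j), hvcard⟩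

end Witness

/-- Counting parts of collapses: (i) any collapse has `#λ` or `#λ + 1` parts;
(ii) partitions in `𝒫_B(n)` (n odd) have an odd number of parts and partitions in
`𝒫_D(n)` (n even) an even number; (iii) for n even the C-collapse has exactly `#λ` parts. -/
theorem card_of_collapse (n : ℕ) (lam : Ptn)
    (hpart : IsPartition lam) (hne : lam ≠ 0) (hsum : lam.sum = n) :
    (∀ X : PType, CollapseDefined X lam →
        Multiset.card (collapse X lam) = Multiset.card lam ∨
        Multiset.card (collapse X lam) = Multiset.card lam + 1) ∧
    (Odd n → ∀ mu : Ptn, InP PType.B mu → mu.sum = n → Odd (Multiset.card mu)) ∧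
    (Even n → ∀ mu : Ptn, InP PType.D mu → mu.sum = n → Even (Multiset.card mu)) ∧
    (Even n → CollapseDefined PType.C lam ∧
        Multiset.card (collapse PType.C lam) = Multiset.card lam) := by
  subst hsum
  have card_C {m : Ptn} (hm : IsCollapse PType.C lam m) :
      Multiset.card m = Multiset.card lam := by
    obtain ⟨v, hv, hvsum, hvdom, hvcard⟩ := exists_inP_C_dom_card_eq hpart hne
      (by simpa [shift, hm.2.1] using hm.1.even_sum_add)
    exact le_antisymm (hvcard ▸ hm.card_le_card_of_dom hv hvsum hvdom) (hm.card_le_card hpart)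
  refine ⟨fun X hX => ?_, fun hodd mu hmu hmusum => ?_, fun heven mu hmu hmusum => ?_,
    fun heven => ?_⟩
  · have hm := isCollapse_collapse hX
    by_cases hXC : X = PType.C
    · subst hXC
      exact Or.inl (card_C hm)
    · obtain ⟨v, hv, hvsum, hvdom, hvcard⟩ := exists_inP_dom_card_le_succ hpart hne hXC
      have := hm.card_le_card_of_dom hv hvsum hvdom
      have := hm.card_le_card hpart
      omega
  · have := hmu.even_sum_add
    simp_all [shift, Nat.even_add, ← Nat.not_even_iff_odd]
  · have := hmu.even_sum_add
    simp_all [shift, Nat.even_add]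
  · have hC : CollapseDefined PType.C lam := exists_isCollapse hpart fun _ => heven
    exact ⟨hC, card_C (isCollapse_collapse hC)⟩

end NilDual
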